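/- For any string w and any symbol c, sre(w) ≤ sre(wc) ≤ sre(w) + 2, where wc denotes the string w with c appended at the end. -/

import Mathlib

variable {α : Type*}

/-- `x` is a right-maximal substring of `w`. -/
def RightMaximal (w x : List α) : Prop :=
  ∃ a b : α, a ≠ b ∧ (x ++ [a]) <:+: w ∧ (x ++ [b]) <:+: w

/-- `y` is a right-extension of `w`. -/
def RightExt (w y : List α) : Prop :=
  ∃ (x : List α) (a : α), RightMaximal w x ∧ y = x ++ [a] ∧ y <:+: w

/-- `y` is a supermaximal right-extension of `w`: a right-extension that is not a
proper suffix of any other right-extension. -/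
def Supermaximal (w y : List α) : Prop :=
  RightExt w y ∧ ∀ z, RightExt w z → y <:+ z → z = y

/-- The number of supermaximal right-extensions of `w`. -/
noncomputable def sre (w : List α) : ℕ :=
  {y | Supermaximal w y}.ncard

/-!
Every supermaximal right-extension of `w` is a right-extension of `w ++ [c]`, and lies below a
supermaximal one there; two supermaximal right-extensions of `w` below the same one would be
suffix-comparable, hence equal, so `sre w ≤ sre (w ++ [c])`.

Conversely, a supermaximal right-extension `z = x ++ [a]` of `w ++ [c]` that is not one of `w`
either is a suffix of `w ++ [c]`, or occurs in `w` with `x` right-maximal only thanks to the new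
letter, which forces `x` to be a suffix of `w` followed in `w` by `a` alone. In each of these two
classes any two members are suffix-comparable, so each contributes at most one.
-/

lemma List.finite_setOf_isInfix (w : List α) : {y | y <:+: w}.Finite :=
  w.sublists.finite_toSet.subset fun _ hy => List.mem_sublists.2 hy.sublist

lemma List.isSuffix_of_append_singleton_isSuffix {x w : List α} {a c : α}
    (h : x ++ [a] <:+ w ++ [c]) : x <:+ w := by
  obtain ⟨s, hs⟩ := h
  rw [← List.append_assoc] at hs
  exact ⟨s, (List.append_inj' hs rfl).1⟩

lemma RightMaximal.mono {w w' x : List α} (hw : w <:+: w') (h : RightMaximal w x) :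
    RightMaximal w' x :=
  let ⟨a, b, hab, ha, hb⟩ := h
  ⟨a, b, hab, ha.trans hw, hb.trans hw⟩

lemma eq_of_not_rightMaximal {w x : List α} {a b : α} (hx : ¬RightMaximal w x)
    (ha : x ++ [a] <:+: w) (hb : x ++ [b] <:+: w) : a = b :=
  not_not.1 fun hab => hx ⟨a, b, hab, ha, hb⟩

lemma RightMaximal.isSuffix_of_append_singleton {w x : List α} {c : α}
    (h : RightMaximal (w ++ [c]) x) (hw : ¬RightMaximal w x) : x <:+ w := by
  obtain ⟨a, b, hab, ha, hb⟩ := h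
  rw [List.infix_concat_iff] at ha hb
  rcases ha with ha | ha
  · exact List.isSuffix_of_append_singleton_isSuffix ha
  rcases hb with hb | hb
  · exact List.isSuffix_of_append_singleton_isSuffix hb
  exact absurd ⟨a, b, hab, ha, hb⟩ hw

lemma RightExt.isInfix {w y : List α} (h : RightExt w y) : y <:+: w :=
  let ⟨_, _, _, _, h⟩ := h
  h

lemma RightExt.mono {w w' y : List α} (hw : w <:+: w') (h : RightExt w y) : RightExt w' y :=
  let ⟨x, a, hx, hy, hyw⟩ := h
  ⟨x, a, hx.mono hw, hy, hyw.trans hw⟩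

lemma finite_setOf_supermaximal (w : List α) : {y | Supermaximal w y}.Finite :=
  (List.finite_setOf_isInfix w).subset fun _ hy => hy.1.isInfix

lemma RightExt.exists_supermaximal {w y : List α} (h : RightExt w y) :
    ∃ z, Supermaximal w z ∧ y <:+ z := by
  have hfin : {z | RightExt w z ∧ y <:+ z}.Finite :=
    (List.finite_setOf_isInfix w).subset fun _ hz => hz.1.isInfix
  obtain ⟨z, ⟨hz, hyz⟩, hmax⟩ := hfin.exists_maximalFor List.length _ ⟨y, h, List.suffix_refl y⟩
  refine ⟨z, ⟨hz, fun z' hz' hzz' => ?_⟩, hyz⟩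
  exact (hzz'.eq_of_length_le (hmax ⟨hz', hyz.trans hzz'⟩ hzz'.length_le)).symm

lemma Supermaximal.of_isInfix {w w' z : List α} (hw : w <:+: w') (h : Supermaximal w' z)
    (hz : RightExt w z) : Supermaximal w z :=
  ⟨hz, fun z' hz' hzz' => h.2 z' (hz'.mono hw) hzz'⟩

lemma Supermaximal.eq_of_suffix_or_suffix {w y z : List α} (hy : Supermaximal w y)
    (hz : Supermaximal w z) (h : y <:+ z ∨ z <:+ y) : y = z := by
  rcases h with h | h
  · exact (hy.2 z hz.1 h).symm
  · exact hz.2 y hy.1 h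

theorem sre_le_sre_of_isInfix {w w' : List α} (hw : w <:+: w') : sre w ≤ sre w' := by
  have hext : ∀ y ∈ {y | Supermaximal w y}, ∃ z, Supermaximal w' z ∧ y <:+ z :=
    fun _ hy => (hy.1.mono hw).exists_supermaximal
  choose! f hf hyf using hext
  refine Set.ncard_le_ncard_of_injOn f hf (fun y₁ hy₁ y₂ hy₂ heq => ?_)
    (finite_setOf_supermaximal w')
  exact hy₁.eq_of_suffix_or_suffix hy₂
    (List.suffix_or_suffix_of_suffix (hyf y₁ hy₁) (heq ▸ hyf y₂ hy₂))

lemma subsingleton_setOf_supermaximal_isSuffix (w : List α) :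
    {z | Supermaximal w z ∧ z <:+ w}.Subsingleton :=
  fun _ h₁ _ h₂ => h₁.1.eq_of_suffix_or_suffix h₂.1 (List.suffix_or_suffix_of_suffix h₁.2 h₂.2)

def NonbranchingSuffixExt (w z : List α) : Prop :=
  ∃ (x : List α) (a : α), z = x ++ [a] ∧ x <:+ w ∧ z <:+: w ∧ ¬RightMaximal w x

lemma append_singleton_isSuffix_of_not_rightMaximal {w x₁ x₂ : List α} {a₁ a₂ : α}
    (hx : x₁ <:+ x₂) (hx₁ : ¬RightMaximal w x₁) (h₁ : x₁ ++ [a₁] <:+: w)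
    (h₂ : x₂ ++ [a₂] <:+: w) : x₁ ++ [a₁] <:+ x₂ ++ [a₂] := by
  have h₁₂ : x₁ ++ [a₂] <:+ x₂ ++ [a₂] := List.suffix_append_self_iff.2 hx
  obtain rfl : a₁ = a₂ := eq_of_not_rightMaximal hx₁ h₁ (h₁₂.isInfix.trans h₂)
  exact h₁₂

lemma subsingleton_setOf_supermaximal_nonbranchingSuffixExt (w' w : List α) :
    {z | Supermaximal w' z ∧ NonbranchingSuffixExt w z}.Subsingleton := by
  rintro _ ⟨h₁, x₁, a₁, rfl, hx₁, hw₁, hn₁⟩ _ ⟨h₂, x₂, a₂, rfl, hx₂, hw₂, hn₂⟩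
  refine h₁.eq_of_suffix_or_suffix h₂ ?_
  rcases List.suffix_or_suffix_of_suffix hx₁ hx₂ with h | h
  · exact .inl (append_singleton_isSuffix_of_not_rightMaximal h hn₁ hw₁ hw₂)
  · exact .inr (append_singleton_isSuffix_of_not_rightMaximal h hn₂ hw₂ hw₁)

lemma Supermaximal.of_append_singleton {w z : List α} {c : α}
    (h : Supermaximal (w ++ [c]) z) :
    Supermaximal w z ∨ z <:+ w ++ [c] ∨ NonbranchingSuffixExt w z := by
  obtain ⟨x, a, hx, rfl, hz⟩ := h.1
  rcases List.infix_concat_iff.1 hz with hsuf | hinf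
  · exact .inr (.inl hsuf)
  by_cases hxw : RightMaximal w x
  · exact .inl (h.of_isInfix List.infix_append_left ⟨x, a, hxw, rfl, hinf⟩)
  · exact .inr (.inr ⟨x, a, rfl, hx.isSuffix_of_append_singleton hxw, hinf, hxw⟩)

theorem sre_append (w : List α) (c : α) :
    sre w ≤ sre (w ++ [c]) ∧ sre (w ++ [c]) ≤ sre w + 2 := by
  refine ⟨sre_le_sre_of_isInfix List.infix_append_left, ?_⟩
  set T₁ := {z | Supermaximal (w ++ [c]) z ∧ z <:+ w ++ [c]}
  set T₂ := {z | Supermaximal (w ++ [c]) z ∧ NonbranchingSuffixExt w z}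
  have hT₁ : T₁.Subsingleton := subsingleton_setOf_supermaximal_isSuffix (w ++ [c])
  have hT₂ : T₂.Subsingleton := subsingleton_setOf_supermaximal_nonbranchingSuffixExt _ w
  have hcover : {z | Supermaximal (w ++ [c]) z} ⊆ {z | Supermaximal w z} ∪ T₁ ∪ T₂ :=
    fun z hz => by
      rcases hz.of_append_singleton with h | h | h
      exacts [.inl (.inl h), .inl (.inr ⟨hz, h⟩), .inr ⟨hz, h⟩]
  calc sre (w ++ [c])
      ≤ ({z | Supermaximal w z} ∪ T₁ ∪ T₂).ncard :=
        Set.ncard_le_ncard hcover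
          (((finite_setOf_supermaximal w).union hT₁.finite).union hT₂.finite)
    _ ≤ sre w + T₁.ncard + T₂.ncard :=
        (Set.ncard_union_le _ _).trans (Nat.add_le_add_right (Set.ncard_union_le _ _) _)
    _ ≤ sre w + 1 + 1 := by
        gcongr
        exacts [(Set.ncard_le_one hT₁.finite).2 hT₁, (Set.ncard_le_one hT₂.finite).2 hT₂]
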